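/- If F : ℝ³ × [0,T] → ℝ^{3×3} and u : ℝ³ × [0,T] → ℝ³ are smooth, u is divergence free, and F satisfies the transport equation ∂ₜF + (u·∇)F = (∇u)F, then each column Fₖ = F eₖ satisfies ∂ₜ(∇·Fₖ) + (u·∇)(∇·Fₖ) = 0. -/

import Mathlib

open Matrix MeasureTheory Real intervalIntegral
open scoped BigOperators

noncomputable section

/-- ℝ³ as functions `Fin 3 → ℝ`. -/
abbrev V3 := Fin 3 → ℝ
/-- 3×3 real matrices. -/
abbrev M3 := Matrix (Fin 3) (Fin 3) ℝ

/-- Partial derivative `∂ⱼ f`. -/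
def pd (j : Fin 3) (f : V3 → ℝ) (x : V3) : ℝ := fderiv ℝ f x (Pi.single j 1)

/-- Euclidean norm on ℝ³. -/
def enorm3 (v : V3) : ℝ := Real.sqrt (∑ i, (v i) ^ 2)

/-- Frobenius norm on 3×3 matrices. -/
def fnorm3 (X : M3) : ℝ := Real.sqrt (∑ i, ∑ j, (X i j) ^ 2)

/-- Euclidean dot product on ℝ³. -/
def dot3 (v w : V3) : ℝ := ∑ i, v i * w i

/-- Divergence `∇·v`. -/
def div3 (v : V3 → V3) (x : V3) : ℝ := ∑ j, pd j (fun y => v y j) x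

/-- Curl `∇×v`. -/
def curl3 (v : V3 → V3) (x : V3) : V3 :=
  ![pd 1 (fun y => v y 2) x - pd 2 (fun y => v y 1) x,
    pd 2 (fun y => v y 0) x - pd 0 (fun y => v y 2) x,
    pd 0 (fun y => v y 1) x - pd 1 (fun y => v y 0) x]

/-- Advective derivative `(u·∇)v`. -/
def adv3 (u v : V3 → V3) (x : V3) : V3 := fun i => ∑ j, u x j * pd j (fun y => v y i) x

/-- Jacobian matrix `(∇u)_{ij} = ∂ⱼuᵢ`. -/
def jac3 (u : V3 → V3) (x : V3) : M3 := Matrix.of fun i j => pd j (fun y => u y i) x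

/-- The bilinear map `a(X,Y) = ∑ᵢ (Xᵀeᵢ) × (Yeᵢ)`. -/
def aBil (X Y : M3) : V3 :=
  ∑ i : Fin 3, crossProduct (Xᵀ.mulVec (Pi.single i 1)) (Y.mulVec (Pi.single i 1))

/-- Spatial L² norm of a vector field. -/
def l2V (f : V3 → V3) : ℝ := Real.sqrt (∫ x, enorm3 (f x) ^ 2)

/-- Iterated partial derivative `∂₀^a ∂₁^b ∂₂^c f`. -/
def pdIter (a b c : ℕ) (f : V3 → ℝ) : V3 → ℝ := (pd 0)^[a] ((pd 1)^[b] ((pd 2)^[c] f))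

/-- The (squared-sum) Sobolev `H^s` norm of a scalar function. -/
def HnormS (s : ℕ) (f : V3 → ℝ) : ℝ :=
  Real.sqrt (∑ α ∈ (Finset.range (s+1) ×ˢ Finset.range (s+1) ×ˢ Finset.range (s+1)).filter
      (fun α => α.1 + α.2.1 + α.2.2 ≤ s),
    ∫ x, (pdIter α.1 α.2.1 α.2.2 f x) ^ 2)

/-- The Sobolev `H^s` norm of a vector field. -/
def HnormV (s : ℕ) (f : V3 → V3) : ℝ :=
  Real.sqrt (∑ i, (HnormS s (fun x => f x i)) ^ 2)

section helpers

lemma contDiff_pd {f : V3 → ℝ} (hf : ContDiff ℝ (⊤ : ℕ∞) f) (j : Fin 3) :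
    ContDiff ℝ (⊤ : ℕ∞) (pd j f) :=
  (hf.fderiv_right (by simp)).clm_apply contDiff_const

lemma pd_second {f : V3 → ℝ} (hf : ContDiff ℝ (⊤ : ℕ∞) f) (i j : Fin 3) (x : V3) :
    pd i (pd j f) x = fderiv ℝ (fderiv ℝ f) x (Pi.single i 1) (Pi.single j 1) := by
  have hd : DifferentiableAt ℝ (fderiv ℝ f) x :=
    ((hf.fderiv_right (m := 1) (by exact WithTop.coe_le_coe.mpr (le_top : ((1 + 1 : ℕ) : ℕ∞) ≤ ⊤))).differentiable one_ne_zero).differentiableAt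
  have h : pd j f = fun y => fderiv ℝ f y (Pi.single j 1) := rfl
  rw [pd, h, fderiv_clm_apply hd (differentiableAt_const _)]
  simp

lemma pd_comm {f : V3 → ℝ} (hf : ContDiff ℝ (⊤ : ℕ∞) f) (i j : Fin 3) (x : V3) :
    pd i (pd j f) x = pd j (pd i f) x := by
  have hsymm : IsSymmSndFDerivAt ℝ f x :=
    hf.contDiffAt.isSymmSndFDerivAt (by rw [minSmoothness_of_isRCLikeNormedField]; exact WithTop.coe_le_coe.mpr (le_top : (2 : ℕ∞) ≤ ⊤))
  rw [pd_second hf i j x, pd_second hf j i x, hsymm]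

lemma pd_congr {f h : V3 → ℝ} (hfh : ∀ y, f y = h y) (j : Fin 3) (x : V3) :
    pd j f x = pd j h x := by
  have : f = h := funext hfh
  rw [this]

lemma pd_const (c : ℝ) (j : Fin 3) (x : V3) : pd j (fun _ => c) x = 0 := by
  simp [pd]

lemma pd_sum {ι : Type*} (s : Finset ι) (f : ι → V3 → ℝ) (j : Fin 3) (x : V3)
    (hf : ∀ i ∈ s, DifferentiableAt ℝ (f i) x) :
    pd j (fun y => ∑ i ∈ s, f i y) x = ∑ i ∈ s, pd j (f i) x := by
  rw [pd, fderiv_fun_sum hf]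
  simp [pd]

lemma pd_mul {f g : V3 → ℝ} (j : Fin 3) (x : V3)
    (hf : DifferentiableAt ℝ f x) (hg : DifferentiableAt ℝ g x) :
    pd j (fun y => f y * g y) x = pd j f x * g x + f x * pd j g x := by
  rw [pd, fderiv_fun_mul hf hg]
  simp [pd]; ring

lemma pd_sub {f g : V3 → ℝ} (j : Fin 3) (x : V3)
    (hf : DifferentiableAt ℝ f x) (hg : DifferentiableAt ℝ g x) :
    pd j (fun y => f y - g y) x = pd j f x - pd j g x := by
  rw [pd, fderiv_fun_sub hf hg]
  simp [pd]

-- slice lemmas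
lemma hasFDerivAt_slice_space {g : ℝ × V3 → ℝ} (hg : ContDiff ℝ (⊤ : ℕ∞) g) (s : ℝ) (x : V3) :
    HasFDerivAt (fun y => g (s, y))
      ((fderiv ℝ g (s, x)).comp (ContinuousLinearMap.inr ℝ ℝ V3)) x :=
  ((hg.differentiable (by simp) (s, x)).hasFDerivAt).comp x (hasFDerivAt_prodMk_right s x)

lemma pd_slice {g : ℝ × V3 → ℝ} (hg : ContDiff ℝ (⊤ : ℕ∞) g) (s : ℝ) (x : V3) (j : Fin 3) :
    pd j (fun y => g (s, y)) x = fderiv ℝ g (s, x) (0, Pi.single j 1) := by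
  rw [pd, (hasFDerivAt_slice_space hg s x).fderiv]
  rfl

lemma hasDerivAt_slice_time {g : ℝ × V3 → ℝ} (hg : ContDiff ℝ (⊤ : ℕ∞) g) (t : ℝ) (y : V3) :
    HasDerivAt (fun s => g (s, y)) (fderiv ℝ g (t, y) (1, 0)) t := by
  have h := ((hg.differentiable (by simp) (t, y)).hasFDerivAt).comp t
      (hasFDerivAt_prodMk_left t y : HasFDerivAt (fun e : ℝ => (e, y)) (ContinuousLinearMap.inl ℝ ℝ V3) t)
  have := h.hasDerivAt
  exact this

lemma deriv_slice {g : ℝ × V3 → ℝ} (hg : ContDiff ℝ (⊤ : ℕ∞) g) (t : ℝ) (y : V3) :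
    deriv (fun s => g (s, y)) t = fderiv ℝ g (t, y) (1, 0) :=
  (hasDerivAt_slice_time hg t y).deriv

lemma contDiff_fderiv_apply {g : ℝ × V3 → ℝ} (hg : ContDiff ℝ (⊤ : ℕ∞) g) (v : ℝ × V3) :
    ContDiff ℝ (⊤ : ℕ∞) (fun p => fderiv ℝ g p v) :=
  (hg.fderiv_right (by simp)).clm_apply contDiff_const

lemma fderiv_apply_dir {g : ℝ × V3 → ℝ} (hg : ContDiff ℝ (⊤ : ℕ∞) g) (p : ℝ × V3) (v w : ℝ × V3) :
    fderiv ℝ (fun q => fderiv ℝ g q v) p w = fderiv ℝ (fderiv ℝ g) p w v := by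
  have hd : DifferentiableAt ℝ (fderiv ℝ g) p :=
    ((hg.fderiv_right (m := 1) (by exact WithTop.coe_le_coe.mpr (le_top : ((1 + 1 : ℕ) : ℕ∞) ≤ ⊤))).differentiable one_ne_zero).differentiableAt
  rw [fderiv_clm_apply hd (differentiableAt_const _)]
  simp

/-- The key time-space derivative swap. -/
lemma deriv_pd_swap {g : ℝ × V3 → ℝ} (hg : ContDiff ℝ (⊤ : ℕ∞) g) (j : Fin 3) (t : ℝ) (x : V3) :
    deriv (fun s => pd j (fun y => g (s, y)) x) t
      = pd j (fun y => deriv (fun s => g (s, y)) t) x := by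
  have hsymm : IsSymmSndFDerivAt ℝ g (t, x) :=
    hg.contDiffAt.isSymmSndFDerivAt (by rw [minSmoothness_of_isRCLikeNormedField]; exact WithTop.coe_le_coe.mpr (le_top : (2 : ℕ∞) ≤ ⊤))
  have h1 : (fun s => pd j (fun y => g (s, y)) x)
      = fun s => (fun p => fderiv ℝ g p (0, Pi.single j 1)) (s, x) := by
    funext s; exact pd_slice hg s x j
  have h2 : (fun y => deriv (fun s => g (s, y)) t)
      = fun y => (fun p => fderiv ℝ g p (1, 0)) (t, y) := by
    funext y; exact deriv_slice hg t y
  rw [h1, h2, deriv_slice (contDiff_fderiv_apply hg _) t x,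
    pd_slice (contDiff_fderiv_apply hg _) t x j,
    fderiv_apply_dir hg, fderiv_apply_dir hg, hsymm]

lemma differentiable_pd_slice {g : ℝ × V3 → ℝ} (hg : ContDiff ℝ (⊤ : ℕ∞) g) (j : Fin 3) (x : V3) :
    Differentiable ℝ (fun s => pd j (fun y => g (s, y)) x) := by
  have h : (fun s => pd j (fun y => g (s, y)) x)
      = fun s => (fun p => fderiv ℝ g p (0, Pi.single j 1)) (s, x) :=
    funext fun s => pd_slice hg s x j
  rw [h]
  exact (((contDiff_fderiv_apply hg _).comp (contDiff_id.prodMk contDiff_const)).differentiable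
    (by simp))

end helpers

theorem stmt2 (T : ℝ) (hT : 0 < T) (u : ℝ → V3 → V3) (F : ℝ → V3 → M3)
    (hu : ContDiff ℝ (⊤ : ℕ∞) (fun p : ℝ × V3 => u p.1 p.2))
    (hF : ∀ i j, ContDiff ℝ (⊤ : ℕ∞) (fun p : ℝ × V3 => F p.1 p.2 i j))
    (hdiv : ∀ t x, div3 (u t) x = 0)
    (heq : ∀ t x (i j : Fin 3),
      deriv (fun s => F s x i j) t + ∑ l, u t x l * pd l (fun y => F t y i j) x
        = ∑ l, pd l (fun y => u t y i) x * F t x l j)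
    (k : Fin 3) (t : ℝ) (ht : t ∈ Set.Icc 0 T) (x : V3) :
    deriv (fun s => div3 (fun y i => F s y i k) x) t
      + ∑ j, u t x j * pd j (fun y => div3 (fun z i => F t z i k) y) x = 0 := by
  classical
  have hFs : ∀ (t : ℝ) (i j : Fin 3), ContDiff ℝ (⊤ : ℕ∞) (fun y => F t y i j) :=
    fun t i j => (hF i j).comp ((contDiff_const (c := t)).prodMk contDiff_id)
  have hus : ∀ (t : ℝ) (i : Fin 3), ContDiff ℝ (⊤ : ℕ∞) (fun y => u t y i) :=
    fun t i => (contDiff_pi.1 hu i).comp ((contDiff_const (c := t)).prodMk contDiff_id)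
  simp only [div3]
  -- Step 1: time derivative of the sum, and swap deriv/pd
  have h1 : deriv (fun s => ∑ j, pd j (fun y => F s y j k) x) t
      = ∑ i : Fin 3, pd i (fun y => deriv (fun s => F s y i k) t) x := by
    rw [deriv_fun_sum (fun i _ => (differentiable_pd_slice (hF i k) i x) t)]
    exact Finset.sum_congr rfl fun i _ => deriv_pd_swap (hF i k) i t x
  rw [h1]
  -- Step 2: use the PDE and expand
  have h2 : ∀ i : Fin 3, pd i (fun y => deriv (fun s => F s y i k) t) x
      = (∑ l, (pd i (pd l (fun z => u t z i)) x * F t x l k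
              + pd l (fun z => u t z i) x * pd i (fun y => F t y l k) x))
        - (∑ l, (pd i (fun y => u t y l) x * pd l (fun z => F t z i k) x
              + u t x l * pd i (pd l (fun z => F t z i k)) x)) := by
    intro i
    have hc : ∀ y, deriv (fun s => F s y i k) t
        = (∑ l, pd l (fun z => u t z i) y * F t y l k)
          - ∑ l, u t y l * pd l (fun z => F t z i k) y := by
      intro y; have h := heq t y i k; linarith
    have dA : DifferentiableAt ℝ (fun y => ∑ l, pd l (fun z => u t z i) y * F t y l k) x :=
      ((ContDiff.sum fun l (_ : l ∈ Finset.univ) =>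
        ((contDiff_pd (hus t i) l).mul (hFs t l k))).differentiable (by simp)).differentiableAt
    have dB : DifferentiableAt ℝ (fun y => ∑ l, u t y l * pd l (fun z => F t z i k) y) x :=
      ((ContDiff.sum fun l (_ : l ∈ Finset.univ) =>
        ((hus t l).mul (contDiff_pd (hFs t i k) l))).differentiable (by simp)).differentiableAt
    calc pd i (fun y => deriv (fun s => F s y i k) t) x
        = pd i (fun y => (∑ l, pd l (fun z => u t z i) y * F t y l k)
            - ∑ l, u t y l * pd l (fun z => F t z i k) y) x := pd_congr hc i x
      _ = pd i (fun y => ∑ l, pd l (fun z => u t z i) y * F t y l k) x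
          - pd i (fun y => ∑ l, u t y l * pd l (fun z => F t z i k) y) x := pd_sub i x dA dB
      _ = (∑ l, pd i (fun y => pd l (fun z => u t z i) y * F t y l k) x)
          - ∑ l, pd i (fun y => u t y l * pd l (fun z => F t z i k) y) x := by
          rw [pd_sum Finset.univ (fun l y => pd l (fun z => u t z i) y * F t y l k) i x
              (fun l _ => (((contDiff_pd (hus t i) l).mul (hFs t l k)).differentiable (by simp)).differentiableAt),
            pd_sum Finset.univ (fun l y => u t y l * pd l (fun z => F t z i k) y) i x
              (fun l _ => (((hus t l).mul (contDiff_pd (hFs t i k) l)).differentiable (by simp)).differentiableAt)]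
      _ = _ := by
          congr 1
          · exact Finset.sum_congr rfl fun l _ => pd_mul i x
              ((contDiff_pd (hus t i) l).differentiable (by simp)).differentiableAt
              (((hFs t l k)).differentiable (by simp)).differentiableAt
          · exact Finset.sum_congr rfl fun l _ => pd_mul i x
              (((hus t l)).differentiable (by simp)).differentiableAt
              ((contDiff_pd (hFs t i k) l).differentiable (by simp)).differentiableAt
  have h3 : ∀ j : Fin 3, pd j (fun y => ∑ i, pd i (fun y' => F t y' i k) y) x
      = ∑ i, pd j (pd i (fun y' => F t y' i k)) x := fun j =>
    pd_sum Finset.univ (fun i => pd i (fun y' => F t y' i k)) j x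
      (fun i _ => ((contDiff_pd (hFs t i k) i).differentiable (by simp)).differentiableAt)
  simp only [h2, h3]
  -- cancellation identities
  have T1 : ∑ i : Fin 3, ∑ l : Fin 3, pd i (pd l (fun z => u t z i)) x * F t x l k = 0 := by
    have hcomm : ∀ i l : Fin 3, pd i (pd l (fun z => u t z i)) x
        = pd l (pd i (fun z => u t z i)) x := fun i l => pd_comm (hus t i) i l x
    have hz : ∀ l : Fin 3, (∑ i, pd l (pd i (fun z => u t z i)) x) = 0 := by
      intro l
      have hsum : (∑ i, pd l (pd i (fun z => u t z i)) x)
          = pd l (fun y => ∑ i, pd i (fun z => u t z i) y) x :=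
        (pd_sum Finset.univ (fun i => pd i (fun z => u t z i)) l x
          (fun i _ => ((contDiff_pd (hus t i) i).differentiable (by simp)).differentiableAt)).symm
      rw [hsum, pd_congr (h := fun _ => (0:ℝ)) (fun y => by simpa [div3] using hdiv t y) l x,
        pd_const]
    calc ∑ i : Fin 3, ∑ l : Fin 3, pd i (pd l (fun z => u t z i)) x * F t x l k
        = ∑ l : Fin 3, ∑ i : Fin 3, pd l (pd i (fun z => u t z i)) x * F t x l k := by
          rw [Finset.sum_comm]
          exact Finset.sum_congr rfl fun l _ => Finset.sum_congr rfl fun i _ => by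
            rw [hcomm]
      _ = ∑ l : Fin 3, (∑ i, pd l (pd i (fun z => u t z i)) x) * F t x l k := by
          simp [Finset.sum_mul]
      _ = 0 := by simp [hz]
  have T2 : (∑ i : Fin 3, ∑ l : Fin 3,
        pd l (fun z => u t z i) x * pd i (fun y => F t y l k) x)
      = ∑ i : Fin 3, ∑ l : Fin 3,
        pd i (fun y => u t y l) x * pd l (fun z => F t z i k) x := Finset.sum_comm
  have T3 : (∑ i : Fin 3, ∑ l : Fin 3, u t x l * pd i (pd l (fun z => F t z i k)) x)
      = ∑ j : Fin 3, u t x j * ∑ i, pd j (pd i (fun y' => F t y' i k)) x := by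
    have hcomm : ∀ i l : Fin 3, pd i (pd l (fun z => F t z i k)) x
        = pd l (pd i (fun z => F t z i k)) x := fun i l => pd_comm (hFs t i k) i l x
    calc (∑ i : Fin 3, ∑ l : Fin 3, u t x l * pd i (pd l (fun z => F t z i k)) x)
        = ∑ i : Fin 3, ∑ l : Fin 3, u t x l * pd l (pd i (fun z => F t z i k)) x :=
          Finset.sum_congr rfl fun i _ => Finset.sum_congr rfl fun l _ => by rw [hcomm]
      _ = ∑ l : Fin 3, ∑ i : Fin 3, u t x l * pd l (pd i (fun z => F t z i k)) x :=
          Finset.sum_comm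
      _ = _ := by simp [Finset.mul_sum]
  simp only [Finset.sum_add_distrib, Finset.sum_sub_distrib]
  linarith [T1, T2, T3]
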